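/- arXiv:2506.03315 — 3 statements merged into one kernel-verified Lean document; each statement's English description precedes it below -/
import Mathlib

section
/- Let R = ⟨A, 𝕊, 𝔼⟩ be a restricted choice structure, K ∈ 𝔼, and ∇ a K-minimal linear choice function for R. Then ∇ satisfies (SS3): for all S₁, S₂ ∈ 𝕊, if ∇(S₁) ⊆ S₂ and ∇(S₂) ⊆ S₁, then ∇(S₁) = ∇(S₂). -/
/-!
If `∇(S₁) = E₁` and `∇(S₂) = E₂` are genuine minima with `E₁ ⊆ S₂` and `E₂ ⊆ S₁`, then each is
comparable to the other inside the other's set, so `E₁ ≪ E₂ ≪ E₁`. The fallback value `K` cannot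
occur on just one side: an element of `𝔼` inside `S` makes the minimum of `S` exist by
smoothness, and linearity makes it unique.
-/

/-- `minOf 𝔼 r S` is the set of `r`-minimal elements among all `E ∈ 𝔼` with `E ⊆ S`. -/
def minOf {A : Type*} (𝔼 : Set (Set A)) (r : Set A → Set A → Prop) (S : Set A) :
    Set (Set A) :=
  {E | E ∈ 𝔼 ∧ E ⊆ S ∧ ∀ F ∈ 𝔼, F ⊆ S → r F E → r E F}

section minOf

variable {A : Type*} {𝔼 : Set (Set A)} {r : Set A → Set A → Prop}

theorem eq_of_mem_minOf_of_subset
    (htotal : ∀ E₁ ∈ 𝔼, ∀ E₂ ∈ 𝔼, r E₁ E₂ ∨ r E₂ E₁)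
    (hanti : ∀ E₁ ∈ 𝔼, ∀ E₂ ∈ 𝔼, r E₁ E₂ → r E₂ E₁ → E₁ = E₂)
    {S₁ S₂ E₁ E₂ : Set A} (hE₁ : E₁ ∈ minOf 𝔼 r S₁) (hE₂ : E₂ ∈ minOf 𝔼 r S₂)
    (h₁₂ : E₁ ⊆ S₂) (h₂₁ : E₂ ⊆ S₁) : E₁ = E₂ := by
  obtain ⟨hE₁𝔼, -, hmin₁⟩ := hE₁
  obtain ⟨hE₂𝔼, -, hmin₂⟩ := hE₂
  have hr₁₂ : r E₁ E₂ :=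
    (htotal E₁ hE₁𝔼 E₂ hE₂𝔼).elim id (hmin₁ E₂ hE₂𝔼 h₂₁)
  exact hanti E₁ hE₁𝔼 E₂ hE₂𝔼 hr₁₂ (hmin₂ E₁ hE₁𝔼 h₁₂ hr₁₂)

theorem minOf_subsingleton
    (htotal : ∀ E₁ ∈ 𝔼, ∀ E₂ ∈ 𝔼, r E₁ E₂ ∨ r E₂ E₁)
    (hanti : ∀ E₁ ∈ 𝔼, ∀ E₂ ∈ 𝔼, r E₁ E₂ → r E₂ E₁ → E₁ = E₂)
    (S : Set A) : (minOf 𝔼 r S).Subsingleton :=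
  fun _ hE _ hF => eq_of_mem_minOf_of_subset htotal hanti hE hF hE.2.1 hF.2.1

theorem exists_minOf_eq_singleton
    (htotal : ∀ E₁ ∈ 𝔼, ∀ E₂ ∈ 𝔼, r E₁ E₂ ∨ r E₂ E₁)
    (hanti : ∀ E₁ ∈ 𝔼, ∀ E₂ ∈ 𝔼, r E₁ E₂ → r E₂ E₁ → E₁ = E₂)
    {S : Set A} (hne : (minOf 𝔼 r S).Nonempty) : ∃ E, minOf 𝔼 r S = {E} :=
  (minOf_subsingleton htotal hanti S).eq_empty_or_singleton.resolve_left hne.ne_empty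

end minOf

theorem linear_choice_SS3_general {A : Type*}
    (𝕊 𝔼 : Set (Set A))
    (K : Set A)
    (ll : Set A → Set A → Prop)
    (htotal : ∀ E₁ ∈ 𝔼, ∀ E₂ ∈ 𝔼, ll E₁ E₂ ∨ ll E₂ E₁)
    (hanti : ∀ E₁ ∈ 𝔼, ∀ E₂ ∈ 𝔼, ll E₁ E₂ → ll E₂ E₁ → E₁ = E₂)
    (hsmooth : ∀ S ∈ 𝕊, (∃ E ∈ 𝔼, E ⊆ S) → (minOf 𝔼 ll S).Nonempty)
    (nabla : Set A → Set A)
    (hdef : ∀ S ∈ 𝕊,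
      (∃ E, minOf 𝔼 ll S = {E} ∧ nabla S = E) ∨
      ((¬ ∃ E, minOf 𝔼 ll S = {E}) ∧ nabla S = K))
    :
    ∀ S₁ ∈ 𝕊, ∀ S₂ ∈ 𝕊, nabla S₁ ⊆ S₂ → nabla S₂ ⊆ S₁ → nabla S₁ = nabla S₂ := by
  intro S₁ hS₁ S₂ hS₂ h₁₂ h₂₁
  have hunique : ∀ S ∈ 𝕊, ∀ E ∈ 𝔼, E ⊆ S → ∃ E', minOf 𝔼 ll S = {E'} :=
    fun S hS E hE hES => exists_minOf_eq_singleton htotal hanti (hsmooth S hS ⟨E, hE, hES⟩)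
  rcases hdef S₁ hS₁ with ⟨E₁, hm₁, hn₁⟩ | ⟨hno₁, hn₁⟩ <;>
    rcases hdef S₂ hS₂ with ⟨E₂, hm₂, hn₂⟩ | ⟨hno₂, hn₂⟩
  · have hE₁ := (Set.eq_singleton_iff_unique_mem.mp hm₁).1
    have hE₂ := (Set.eq_singleton_iff_unique_mem.mp hm₂).1
    rw [hn₁, hn₂]
    exact eq_of_mem_minOf_of_subset htotal hanti hE₁ hE₂ (hn₁ ▸ h₁₂) (hn₂ ▸ h₂₁)
  · have hE₁ := (Set.eq_singleton_iff_unique_mem.mp hm₁).1.1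
    exact (hno₂ (hunique S₂ hS₂ E₁ hE₁ (hn₁ ▸ h₁₂))).elim
  · have hE₂ := (Set.eq_singleton_iff_unique_mem.mp hm₂).1.1
    exact (hno₁ (hunique S₁ hS₁ E₂ hE₂ (hn₂ ▸ h₂₁))).elim
  · exact hn₁.trans hn₂.symm

/-- (SS3): a K-minimal linear choice function satisfies: if `∇(S₁) ⊆ S₂` and
`∇(S₂) ⊆ S₁`, then `∇(S₁) = ∇(S₂)`. -/
theorem linear_choice_SS3 {A : Type*}
    (𝕊 𝔼 : Set (Set A)) (hS : 𝕊.Nonempty) (hE : 𝔼.Nonempty) (hES : 𝔼 ⊆ 𝕊)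
    (K : Set A) (hK : K ∈ 𝔼)
    (ll : Set A → Set A → Prop)
    (hrefl : ∀ E ∈ 𝔼, ll E E)
    (htrans : ∀ E₁ ∈ 𝔼, ∀ E₂ ∈ 𝔼, ∀ E₃ ∈ 𝔼, ll E₁ E₂ → ll E₂ E₃ → ll E₁ E₃)
    (htotal : ∀ E₁ ∈ 𝔼, ∀ E₂ ∈ 𝔼, ll E₁ E₂ ∨ ll E₂ E₁)
    (hanti : ∀ E₁ ∈ 𝔼, ∀ E₂ ∈ 𝔼, ll E₁ E₂ → ll E₂ E₁ → E₁ = E₂)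
    (hsmooth : ∀ S ∈ 𝕊, (∃ E ∈ 𝔼, E ⊆ S) → (minOf 𝔼 ll S).Nonempty)
    (hKmin : {E ∈ 𝔼 | ∀ E' ∈ 𝔼, ll E' E → ll E E'} = {K})
    (nabla : Set A → Set A)
    (hdef : ∀ S ∈ 𝕊,
      (∃ E, minOf 𝔼 ll S = {E} ∧ nabla S = E) ∨
      ((¬ ∃ E, minOf 𝔼 ll S = {E}) ∧ nabla S = K))
    :
    ∀ S₁ ∈ 𝕊, ∀ S₂ ∈ 𝕊, nabla S₁ ⊆ S₂ → nabla S₂ ⊆ S₁ → nabla S₁ = nabla S₂ :=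
  linear_choice_SS3_general 𝕊 𝔼 K ll htotal hanti hsmooth nabla hdef
end

section
/- Let R = ⟨A, 𝕊, 𝔼⟩ be a union-closed restricted choice structure, K ∈ 𝔼, and ∇ a K-minimal linear choice function for R. Then ∇ satisfies (SS5): if ∇(S_i ∪ S_{i+1}) = S_i for all 0 ≤ i ≤ n-1 and ∇(S_n ∪ S_0) = S_n with S₀ ≠ S_n, then a contradiction follows; i.e., S₀ ≠ S_n implies ∇(S₀ ∪ S_n) ≠ S_n. -/
section RelOn

variable {α : Type*} {s : Set α} {r : α → α → Prop}

theorem mem_and_le_of_setOf_minimal_eq_singleton (htotal : ∀ a ∈ s, ∀ b ∈ s, r a b ∨ r b a)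
    {k : α} (hk : {a ∈ s | ∀ b ∈ s, r b a → r a b} = {k}) : k ∈ s ∧ ∀ b ∈ s, r k b := by
  have hkmin : k ∈ {a ∈ s | ∀ b ∈ s, r b a → r a b} := hk ▸ rfl
  exact ⟨hkmin.1, fun b hb => (htotal k hkmin.1 b hb).elim id (hkmin.2 b hb)⟩

theorem rel_zero_succ_of_chain (htrans : ∀ a ∈ s, ∀ b ∈ s, ∀ c ∈ s, r a b → r b c → r a c)
    {f : ℕ → α} {n : ℕ} (hf : ∀ i ≤ n, f i ∈ s) (hstep : ∀ i < n, r (f i) (f (i + 1))) :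
    ∀ m < n, r (f 0) (f (m + 1)) := by
  intro m hm
  induction m with
  | zero => exact hstep 0 hm
  | succ k ih =>
    exact htrans _ (hf 0 (Nat.zero_le n)) _ (hf (k + 1) hm.le) _ (hf (k + 2) hm)
      (ih (Nat.lt_of_succ_lt hm)) (hstep (k + 1) hm)

end RelOn

section MinOf

variable {A : Type*} {𝔼 : Set (Set A)} {r : Set A → Set A → Prop}

theorem le_of_mem_minOf (htotal : ∀ E₁ ∈ 𝔼, ∀ E₂ ∈ 𝔼, r E₁ E₂ ∨ r E₂ E₁) {S E : Set A}
    (hE : E ∈ minOf 𝔼 r S) : ∀ F ∈ 𝔼, F ⊆ S → r E F :=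
  fun F hF hFS => (htotal E hE.1 F hF).elim id (hE.2.2 F hF hFS)

theorem choice_mem_and_le (htotal : ∀ E₁ ∈ 𝔼, ∀ E₂ ∈ 𝔼, r E₁ E₂ ∨ r E₂ E₁) {K : Set A}
    (hKmin : {E ∈ 𝔼 | ∀ E' ∈ 𝔼, r E' E → r E E'} = {K}) {nabla : Set A → Set A} {S : Set A}
    (hdef : (∃ E, minOf 𝔼 r S = {E} ∧ nabla S = E) ∨
      ((¬ ∃ E, minOf 𝔼 r S = {E}) ∧ nabla S = K)) :
    nabla S ∈ 𝔼 ∧ ∀ F ∈ 𝔼, F ⊆ S → r (nabla S) F := by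
  rcases hdef with ⟨E, hmin, rfl⟩ | ⟨-, rfl⟩
  · have hE : nabla S ∈ minOf 𝔼 r S := hmin ▸ rfl
    exact ⟨hE.1, le_of_mem_minOf htotal hE⟩
  · obtain ⟨hK, hKle⟩ := mem_and_le_of_setOf_minimal_eq_singleton htotal hKmin
    exact ⟨hK, fun F hF _ => hKle F hF⟩

end MinOf

theorem linear_choice_SS5_general {A : Type*}
    (𝕊 𝔼 : Set (Set A))
    (K : Set A)
    (ll : Set A → Set A → Prop)
    (htrans : ∀ E₁ ∈ 𝔼, ∀ E₂ ∈ 𝔼, ∀ E₃ ∈ 𝔼, ll E₁ E₂ → ll E₂ E₃ → ll E₁ E₃)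
    (htotal : ∀ E₁ ∈ 𝔼, ∀ E₂ ∈ 𝔼, ll E₁ E₂ ∨ ll E₂ E₁)
    (hanti : ∀ E₁ ∈ 𝔼, ∀ E₂ ∈ 𝔼, ll E₁ E₂ → ll E₂ E₁ → E₁ = E₂)
    (hKmin : {E ∈ 𝔼 | ∀ E' ∈ 𝔼, ll E' E → ll E E'} = {K})
    (nabla : Set A → Set A)
    (hdef : ∀ S ∈ 𝕊,
      (∃ E, minOf 𝔼 ll S = {E} ∧ nabla S = E) ∨
      ((¬ ∃ E, minOf 𝔼 ll S = {E}) ∧ nabla S = K))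
    (hUC : ∀ S₁ ∈ 𝕊, ∀ S₂ ∈ 𝕊, S₁ ∪ S₂ ∈ 𝕊) :
    ∀ (n : ℕ) (S : ℕ → Set A), (∀ i ≤ n, S i ∈ 𝕊) →
      (∀ i < n, nabla (S i ∪ S (i + 1)) = S i) →
      S 0 ≠ S n → nabla (S 0 ∪ S n) ≠ S n := by
  intro n S hS𝕊 hchain hne hcycle
  have hchoice : ∀ i ≤ n, ∀ j ≤ n, nabla (S i ∪ S j) ∈ 𝔼 ∧
      ∀ F ∈ 𝔼, F ⊆ S i ∪ S j → ll (nabla (S i ∪ S j)) F := fun i hi j hj =>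
    choice_mem_and_le htotal hKmin (hdef _ (hUC _ (hS𝕊 i hi) _ (hS𝕊 j hj)))
  have hlast := hcycle ▸ hchoice 0 (Nat.zero_le n) n le_rfl
  have hS𝔼 : ∀ i ≤ n, S i ∈ 𝔼 := fun i hi => by
    rcases hi.lt_or_eq with hi | rfl
    · simpa only [hchain i hi] using (hchoice i hi.le (i + 1) hi).1
    · exact hlast.1
  have hstep : ∀ i < n, ll (S i) (S (i + 1)) := fun i hi => by
    simpa only [hchain i hi] using
      (hchoice i hi.le (i + 1) hi).2 _ (hS𝔼 (i + 1) hi) Set.subset_union_right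
  obtain ⟨m, rfl⟩ : ∃ m, n = m + 1 := Nat.exists_eq_succ_of_ne_zero (by rintro rfl; exact hne rfl)
  exact hne <| hanti _ (hS𝔼 0 (Nat.zero_le _)) _ (hS𝔼 _ le_rfl)
    (rel_zero_succ_of_chain htrans hS𝔼 hstep m m.lt_succ_self)
    (hlast.2 _ (hS𝔼 0 (Nat.zero_le _)) Set.subset_union_left)

/-- (SS5): for a union-closed restricted choice structure, a K-minimal linear choice
function satisfies: if `∇(S i ∪ S (i+1)) = S i` for all `i < n`, then `S 0 ≠ S n`
implies `∇(S 0 ∪ S n) ≠ S n`. -/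
theorem linear_choice_SS5 {A : Type*}
    (𝕊 𝔼 : Set (Set A)) (hS : 𝕊.Nonempty) (hE : 𝔼.Nonempty) (hES : 𝔼 ⊆ 𝕊)
    (K : Set A) (hK : K ∈ 𝔼)
    (ll : Set A → Set A → Prop)
    (hrefl : ∀ E ∈ 𝔼, ll E E)
    (htrans : ∀ E₁ ∈ 𝔼, ∀ E₂ ∈ 𝔼, ∀ E₃ ∈ 𝔼, ll E₁ E₂ → ll E₂ E₃ → ll E₁ E₃)
    (htotal : ∀ E₁ ∈ 𝔼, ∀ E₂ ∈ 𝔼, ll E₁ E₂ ∨ ll E₂ E₁)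
    (hanti : ∀ E₁ ∈ 𝔼, ∀ E₂ ∈ 𝔼, ll E₁ E₂ → ll E₂ E₁ → E₁ = E₂)
    (hsmooth : ∀ S ∈ 𝕊, (∃ E ∈ 𝔼, E ⊆ S) → (minOf 𝔼 ll S).Nonempty)
    (hKmin : {E ∈ 𝔼 | ∀ E' ∈ 𝔼, ll E' E → ll E E'} = {K})
    (nabla : Set A → Set A)
    (hdef : ∀ S ∈ 𝕊,
      (∃ E, minOf 𝔼 ll S = {E} ∧ nabla S = E) ∨
      ((¬ ∃ E, minOf 𝔼 ll S = {E}) ∧ nabla S = K))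
    (hUC : ∀ S₁ ∈ 𝕊, ∀ S₂ ∈ 𝕊, S₁ ∪ S₂ ∈ 𝕊) :
    ∀ (n : ℕ) (S : ℕ → Set A), (∀ i ≤ n, S i ∈ 𝕊) →
      (∀ i < n, nabla (S i ∪ S (i + 1)) = S i) →
      S 0 ≠ S n → nabla (S 0 ∪ S n) ≠ S n :=
  linear_choice_SS5_general 𝕊 𝔼 K ll htrans htotal hanti hKmin nabla hdef hUC
end

section
/- Let ∇: 𝕊 → 𝔼 satisfy (SS3): ∇(S₁) ⊆ S₂ and ∇(S₂) ⊆ S₁ imply ∇(S₁) = ∇(S₂), and (SS2). Define ⊴ on Image(∇) by E₁ ⊴ E₂ iff E₁ = K or ∃E ∈ 𝕊 with E₁ ∪ E₂ ⊆ E and ∇(E) = E₁. Then ⊴ is antisymmetric: E₁ ⊴ E₂ and E₂ ⊴ E₁ imply E₁ = E₂. -/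
section NablaLE

variable {A : Type*} (𝕊 : Set (Set A)) (K : Set A) (nabla : Set A → Set A)

/-- The paper's `E₁ ⊴ E₂`, defined here on all of `Set A` rather than on `Image(∇)`. -/
def NablaLE (E₁ E₂ : Set A) : Prop :=
  E₁ = K ∨ ∃ E ∈ 𝕊, E₁ ∪ E₂ ⊆ E ∧ nabla E = E₁

variable {𝕊 K nabla}

theorem NablaLE.eq_of_right_eq (hSS2 : ∀ S ∈ 𝕊, K ⊆ S → nabla S = K) {E₁ : Set A}
    (h : NablaLE 𝕊 K nabla E₁ K) : E₁ = K := by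
  rcases h with hK | ⟨E, hE, hsub, rfl⟩
  · exact hK
  · exact hSS2 E hE (Set.union_subset_iff.1 hsub).2

theorem NablaLE.antisymm (hSS2 : ∀ S ∈ 𝕊, K ⊆ S → nabla S = K)
    (hSS3 : ∀ S₁ ∈ 𝕊, ∀ S₂ ∈ 𝕊, nabla S₁ ⊆ S₂ → nabla S₂ ⊆ S₁ → nabla S₁ = nabla S₂)
    {E₁ E₂ : Set A} (h₁₂ : NablaLE 𝕊 K nabla E₁ E₂) (h₂₁ : NablaLE 𝕊 K nabla E₂ E₁) :
    E₁ = E₂ := by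
  rcases h₁₂ with rfl | ⟨F, hF, hF₁₂, rfl⟩
  · exact (h₂₁.eq_of_right_eq hSS2).symm
  rcases h₂₁ with rfl | ⟨G, hG, hG₂₁, rfl⟩
  · exact NablaLE.eq_of_right_eq hSS2 (Or.inr ⟨F, hF, hF₁₂, rfl⟩)
  · exact hSS3 F hF G hG (Set.union_subset_iff.1 hG₂₁).2 (Set.union_subset_iff.1 hF₁₂).2

end NablaLE

theorem encoded_relation_antisymmetric_general {A : Type*}
    (𝕊 : Set (Set A))
    (K : Set A)
    (nabla : Set A → Set A)
    (hSS2 : ∀ S ∈ 𝕊, K ⊆ S → nabla S = K)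
    (hSS3 : ∀ S₁ ∈ 𝕊, ∀ S₂ ∈ 𝕊, nabla S₁ ⊆ S₂ → nabla S₂ ⊆ S₁ → nabla S₁ = nabla S₂) :
    ∀ E₁ ∈ {E | ∃ S ∈ 𝕊, nabla S = E}, ∀ E₂ ∈ {E | ∃ S ∈ 𝕊, nabla S = E},
      (E₁ = K ∨ ∃ E ∈ 𝕊, E₁ ∪ E₂ ⊆ E ∧ nabla E = E₁) →
      (E₂ = K ∨ ∃ E ∈ 𝕊, E₂ ∪ E₁ ⊆ E ∧ nabla E = E₂) →
      E₁ = E₂ :=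
  fun _ _ _ _ h₁₂ h₂₁ => NablaLE.antisymm hSS2 hSS3 h₁₂ h₂₁

/-- If `∇` satisfies (SS3) and (SS2), then the relation `⊴` on `Image(∇)` defined by
`E₁ ⊴ E₂` iff `E₁ = K` or there exists `E ∈ 𝕊` with `E₁ ∪ E₂ ⊆ E` and `∇(E) = E₁`
is antisymmetric. -/
theorem encoded_relation_antisymmetric {A : Type*}
    (𝕊 𝔼 : Set (Set A)) (hS : 𝕊.Nonempty) (hE : 𝔼.Nonempty) (hES : 𝔼 ⊆ 𝕊)
    (K : Set A) (hK : K ∈ 𝔼)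
    (nabla : Set A → Set A)
    (hSS2 : ∀ S ∈ 𝕊, K ⊆ S → nabla S = K)
    (hSS3 : ∀ S₁ ∈ 𝕊, ∀ S₂ ∈ 𝕊, nabla S₁ ⊆ S₂ → nabla S₂ ⊆ S₁ → nabla S₁ = nabla S₂) :
    ∀ E₁ ∈ {E | ∃ S ∈ 𝕊, nabla S = E}, ∀ E₂ ∈ {E | ∃ S ∈ 𝕊, nabla S = E},
      (E₁ = K ∨ ∃ E ∈ 𝕊, E₁ ∪ E₂ ⊆ E ∧ nabla E = E₁) →
      (E₂ = K ∨ ∃ E ∈ 𝕊, E₂ ∪ E₁ ⊆ E ∧ nabla E = E₂) →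
      E₁ = E₂ :=
  encoded_relation_antisymmetric_general 𝕊 K nabla hSS2 hSS3
end
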